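/- arXiv:math/0511401 — 4 statements merged into one kernel-verified Lean document; each statement's English description precedes it below -/
import Mathlib

section
/- Let c satisfy [H1] and [H2], let k ∈ ℝ, k ≠ 0, and let u₁, u₂ be the Jost solutions from +∞ and from −∞ at k. Suppose T, R₁, R₂ ∈ ℂ with T ≠ 0 satisfy, for all x ∈ ℝ, u₂(x) = (R₁/T) u₁(x) + (1/T) conj(u₁(x)) and u₁(x) = (R₂/T) u₂(x) + (1/T) conj(u₂(x)). Then |T|² + |R₂|² = 1 and |T|² + |R₁|² = 1; in particular |T| ≤ 1, |R₁| ≤ 1 and |R₂| ≤ 1. -/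
open MeasureTheory Filter Topology

noncomputable section

/-- Hypothesis [H1]: `c` is essentially bounded below away from `0` and bounded above. -/
def HypH1 (c : ℝ → ℝ) : Prop :=
  ∃ c₀ > (0 : ℝ), ∃ cM > (0 : ℝ), ∀ᵐ x : ℝ, c₀ < c x ∧ c x ≤ cM

/-- Hypothesis [H1] with explicit constants `c₀`, `cM`. -/
def HypH1c (c : ℝ → ℝ) (c₀ cM : ℝ) : Prop :=
  0 < c₀ ∧ 0 < cM ∧ ∀ᵐ x : ℝ, c₀ < c x ∧ c x ≤ cM

/-- Hypothesis [H2]: `|c(x) - 1| ≤ C ⟨x⟩^{-1-δ}` almost everywhere. -/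
def HypH2 (c : ℝ → ℝ) : Prop :=
  ∃ C > (0 : ℝ), ∃ δ > (0 : ℝ),
    ∀ᵐ x : ℝ, |c x - 1| ≤ C * (1 + x ^ 2) ^ (-(1 + δ) / 2)

/-- `u` is continuously differentiable, its derivative is locally absolutely continuous,
and `u'' + (k²/c²) u = 0` holds almost everywhere (equivalently, the integral formulation
of the second-order equation holds). -/
def SolvesHelmholtz (c : ℝ → ℝ) (k : ℂ) (u : ℝ → ℂ) : Prop :=
  ContDiff ℝ 1 u ∧
  ∀ a b : ℝ, deriv u b = deriv u a + ∫ x in a..b, -(k ^ 2 / ((c x : ℂ) ^ 2)) * u x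

/-- The Jost solution from `+∞` at `k` : `e^{-ikx} u(x) → 1` as `x → +∞`. -/
def IsJostPlus (c : ℝ → ℝ) (k : ℂ) (u : ℝ → ℂ) : Prop :=
  SolvesHelmholtz c k u ∧
  Tendsto (fun x : ℝ => Complex.exp (-(Complex.I * k * (x : ℂ))) * u x) atTop (𝓝 1)

/-- The Jost solution from `-∞` at `k` : `e^{ikx} u(x) → 1` as `x → -∞`. -/
def IsJostMinus (c : ℝ → ℝ) (k : ℂ) (u : ℝ → ℂ) : Prop :=
  SolvesHelmholtz c k u ∧
  Tendsto (fun x : ℝ => Complex.exp (Complex.I * k * (x : ℂ)) * u x) atBot (𝓝 1)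

/-- `q = 1 - 1/c²`. -/
def qfun (c : ℝ → ℝ) (x : ℝ) : ℝ := 1 - 1 / (c x) ^ 2

/-- `Q = 1 - 1/c`. -/
def Qfun (c : ℝ → ℝ) (x : ℝ) : ℝ := 1 - 1 / c x

/-!
Eliminating `u₂` from the two connection formulas leaves a relation `α u₁ + β ū₁ = 0` with
`α = R₂ R₁ T̄ + T - T² T̄` and `β = R₂ T̄ + R̄₁ T`. As `u₁(x) ~ e^{ikx}` at `+∞`, the function
`α + β e^{-2ikx}` tends to `0`; being periodic it vanishes, so `α = β = 0`. Now `α - R₁ β = 0`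
reads `T (1 - |T|² - |R₁|²) = 0`, and `β = 0` gives `|R₂| |T| = |R₁| |T|`.
-/

open Real ComplexConjugate

theorem Function.Periodic.eq_of_tendsto_atTop {β : Type*} [TopologicalSpace β] [T2Space β]
    {f : ℝ → β} {p : ℝ} (hf : Function.Periodic f p) (hp : p ≠ 0) {L : β}
    (hL : Tendsto f atTop (𝓝 L)) (x : ℝ) : f x = L := by
  have hf' : Function.Periodic f |p| := by
    rcases abs_choice p with h | h <;> rw [h]
    exacts [hf, hf.neg]
  have hseq : Tendsto (fun n : ℕ => x + n * |p|) atTop atTop :=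
    tendsto_atTop_add_const_left _ x
      (tendsto_natCast_atTop_atTop.atTop_mul_const (abs_pos.mpr hp))
  refine tendsto_nhds_unique tendsto_const_nhds ((hL.comp hseq).congr fun n => ?_)
  exact hf'.nat_mul n x

theorem antiperiodic_cexp_neg_two_I_mul (k : ℝ) (hk : k ≠ 0) :
    Function.Antiperiodic (fun x : ℝ => Complex.exp (-(2 * Complex.I * k * x))) (π / (2 * k)) := by
  intro x
  have hk' : (k : ℂ) ≠ 0 := by exact_mod_cast hk
  have harg : -(2 * Complex.I * k * ((x + π / (2 * k) : ℝ) : ℂ))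
      = -(2 * Complex.I * k * x) - π * Complex.I := by
    push_cast
    field_simp
    ring
  simp only [harg, Complex.exp_antiperiodic.sub_eq]

theorem eq_zero_of_mul_add_mul_conj_eq_zero {k : ℝ} (hk : k ≠ 0) {u : ℝ → ℂ}
    (hu : Tendsto (fun x : ℝ => Complex.exp (-(Complex.I * k * x)) * u x) atTop (𝓝 1))
    {a b : ℂ} (hab : ∀ x, a * u x + b * conj (u x) = 0) : a = 0 ∧ b = 0 := by
  set e : ℝ → ℂ := fun x => Complex.exp (-(2 * Complex.I * k * x)) with he_def
  set v : ℝ → ℂ := fun x => Complex.exp (-(Complex.I * k * x)) * u x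
  have he := antiperiodic_cexp_neg_two_I_mul k hk
  have hnorm_e : ∀ x, ‖e x‖ = 1 := fun x => by
    simp [he_def, Complex.norm_exp]
  -- `a + b e` differs from `e^{-ikx} (a u + b ū) = 0` by a term that tends to `0`.
  have hw : ∀ x, a + b * e x = a * (1 - v x) + b * e x * (1 - conj (v x)) := fun x => by
    have hconj : e x * conj (v x) = Complex.exp (-(Complex.I * k * x)) * conj (u x) := by
      simp only [e, v, map_mul, ← Complex.exp_conj, map_neg, Complex.conj_I, Complex.conj_ofReal]
      rw [← mul_assoc, ← Complex.exp_add]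
      ring_nf
    linear_combination (Complex.exp (-(Complex.I * k * x))) * hab x + b * hconj
  have hlim : Tendsto (fun x => a + b * e x) atTop (𝓝 0) := by
    refine squeeze_zero_norm (a := fun x => (‖a‖ + ‖b‖) * ‖1 - v x‖) (fun x => ?_) ?_
    · have hv : ‖1 - conj (v x)‖ = ‖1 - v x‖ := by
        rw [← Complex.norm_conj, map_sub, map_one, Complex.conj_conj]
      calc ‖a + b * e x‖ ≤ ‖a * (1 - v x)‖ + ‖b * e x * (1 - conj (v x))‖ :=
            hw x ▸ norm_add_le _ _
        _ = _ := by rw [norm_mul, norm_mul, norm_mul, hnorm_e, hv]; ring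
    · simpa using ((tendsto_const_nhds (x := (1 : ℂ)).sub hu).norm).const_mul (‖a‖ + ‖b‖)
  have hper := (he.periodic_two_mul.comp fun z => a + b * z).eq_of_tendsto_atTop
    (by positivity) hlim
  have h0 : a + b = 0 := by simpa [e] using hper 0
  have h1 : a - b = 0 := by
    have h := hper (π / (2 * k))
    rw [Function.comp_apply, he.eq] at h
    simpa [sub_eq_add_neg] using h
  exact ⟨by linear_combination (h0 + h1) / 2, by linear_combination (h0 - h1) / 2⟩

theorem norm_sq_add_norm_sq_eq_one_of_scattering_relations {T R₁ R₂ : ℂ} (hT : T ≠ 0)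
    (hA : R₂ * R₁ * conj T + T - T ^ 2 * conj T = 0) (hB : R₂ * conj T + conj R₁ * T = 0) :
    ‖T‖ ^ 2 + ‖R₁‖ ^ 2 = 1 ∧ ‖R₂‖ = ‖R₁‖ := by
  constructor
  · have h : T * (T * conj T + R₁ * conj R₁) = T * 1 := by linear_combination -hA + R₁ * hB
    have := mul_left_cancel₀ hT h
    rw [Complex.mul_conj', Complex.mul_conj'] at this
    exact_mod_cast this
  · have h := congrArg norm (eq_neg_of_add_eq_zero_left hB)
    rw [norm_neg, norm_mul, norm_mul, Complex.norm_conj, Complex.norm_conj] at h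
    exact mul_right_cancel₀ (norm_ne_zero_iff.mpr hT) h

theorem scattering_unitarity_general (c : ℝ → ℝ) (k : ℝ) (hk : k ≠ 0)
    (u₁ u₂ : ℝ → ℂ) (hu₁ : IsJostPlus c (k : ℂ) u₁)
    (T R₁ R₂ : ℂ) (hT : T ≠ 0)
    (hrel₁ : ∀ x : ℝ, u₂ x = (R₁ / T) * u₁ x + (1 / T) * (starRingEnd ℂ) (u₁ x))
    (hrel₂ : ∀ x : ℝ, u₁ x = (R₂ / T) * u₂ x + (1 / T) * (starRingEnd ℂ) (u₂ x)) :
    ‖T‖ ^ 2 + ‖R₂‖ ^ 2 = 1 ∧ ‖T‖ ^ 2 + ‖R₁‖ ^ 2 = 1 ∧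
      ‖T‖ ≤ 1 ∧ ‖R₁‖ ≤ 1 ∧ ‖R₂‖ ≤ 1 := by
  have hrel : ∀ x, (R₂ * R₁ * conj T + T - T ^ 2 * conj T) * u₁ x
      + (R₂ * conj T + conj R₁ * T) * conj (u₁ x) = 0 := fun x => by
    have h₁ : T * u₂ x = R₁ * u₁ x + conj (u₁ x) := by rw [hrel₁ x]; field_simp
    have h₂ : T * u₁ x = R₂ * u₂ x + conj (u₂ x) := by rw [hrel₂ x]; field_simp
    have h₃ : conj T * conj (u₂ x) = conj R₁ * conj (u₁ x) + u₁ x := by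
      simpa using congrArg conj h₁
    linear_combination -(conj T * R₂) * h₁ - conj T * T * h₂ - T * h₃
  obtain ⟨hA, hB⟩ := eq_zero_of_mul_add_mul_conj_eq_zero hk hu₁.2 hrel
  obtain ⟨hTR₁, hR₂⟩ := norm_sq_add_norm_sq_eq_one_of_scattering_relations hT hA hB
  have hTR₂ : ‖T‖ ^ 2 + ‖R₂‖ ^ 2 = 1 := hR₂ ▸ hTR₁
  have hle : ∀ z w : ℂ, ‖z‖ ^ 2 + ‖w‖ ^ 2 = 1 → ‖z‖ ≤ 1 := fun z w h =>
    (pow_le_one_iff_of_nonneg (norm_nonneg z) two_ne_zero).mp (by nlinarith [sq_nonneg ‖w‖])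
  exact ⟨hTR₂, hTR₁, hle T R₁ hTR₁, hle R₁ T (by linarith), hle R₂ T (by linarith)⟩

/-- Unitarity of the scattering matrix: `|T|² + |R₂|² = 1`, `|T|² + |R₁|² = 1`. -/
theorem scattering_unitarity (c : ℝ → ℝ) (hmeas : Measurable c)
    (h1 : HypH1 c) (h2 : HypH2 c) (k : ℝ) (hk : k ≠ 0)
    (u₁ u₂ : ℝ → ℂ) (hu₁ : IsJostPlus c (k : ℂ) u₁) (hu₂ : IsJostMinus c (k : ℂ) u₂)
    (T R₁ R₂ : ℂ) (hT : T ≠ 0)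
    (hrel₁ : ∀ x : ℝ, u₂ x = (R₁ / T) * u₁ x + (1 / T) * (starRingEnd ℂ) (u₁ x))
    (hrel₂ : ∀ x : ℝ, u₁ x = (R₂ / T) * u₂ x + (1 / T) * (starRingEnd ℂ) (u₂ x)) :
    ‖T‖ ^ 2 + ‖R₂‖ ^ 2 = 1 ∧ ‖T‖ ^ 2 + ‖R₁‖ ^ 2 = 1 ∧
      ‖T‖ ≤ 1 ∧ ‖R₁‖ ≤ 1 ∧ ‖R₂‖ ≤ 1 :=
  scattering_unitarity_general c k hk u₁ u₂ hu₁ T R₁ R₂ hT hrel₁ hrel₂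
end
end

section
/- Let c satisfy [H1] and [H2], let k ∈ ℂ with Im k ≥ 0, and let u₁ be the Jost solution from +∞ at k. Then u₁(x) ≠ 0 for every x ∈ ℝ. -/
open MeasureTheory Filter Topology

noncomputable section

open Set intervalIntegral ComplexConjugate

/-!
Suppose `u(x₀) = 0`. Since `(ū u')' = |u'|² - k² |u|² / c²` almost everywhere, integrating from
`x₀` gives `ū(b) u'(b) = P(b) - k² Q(b)` with `P, Q ≥ 0` nondecreasing, and `Q(b) > 0` for large `b`
because `u` does not vanish near `+∞`.

* If `Im k > 0`, then `u` decays exponentially and `u'` converges, so `ū u' → 0`. But `k² ∉ [0, ∞)`,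
  so `|P - k² Q| ≥ max (|Im k²|, -Re k²) Q` stays bounded away from `0`.
* If `k ≠ 0` is real, then `ū u'` is real, so `u / ū` is constant near `+∞` and `e^{-2ikx}`
  would converge.
* If `k = 0`, then `u` is affine with a finite limit, hence `u ≡ 1`.
-/

theorem AbsolutelyContinuousOnInterval.of_dist_le {X Y : Type*} [PseudoMetricSpace X]
    [PseudoMetricSpace Y] {f : ℝ → X} {g : ℝ → Y} {a b : ℝ}
    (hg : AbsolutelyContinuousOnInterval g a b)
    (hfg : ∀ x y, dist (f x) (f y) ≤ dist (g x) (g y)) :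
    AbsolutelyContinuousOnInterval f a b :=
  squeeze_zero (fun _ ↦ Finset.sum_nonneg fun _ _ ↦ dist_nonneg)
    (fun _ ↦ Finset.sum_le_sum fun _ _ ↦ hfg _ _) hg

theorem MeasureTheory.LocallyIntegrable.intervalIntegrable {E : Type*} [NormedAddCommGroup E]
    {f : ℝ → E} (hf : LocallyIntegrable f volume) (a b : ℝ) : IntervalIntegrable f volume a b :=
  (hf.integrableOn_isCompact isCompact_uIcc).intervalIntegrable

theorem IntervalIntegrable.ofReal {f : ℝ → ℝ} {a b : ℝ} (hf : IntervalIntegrable f volume a b) :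
    IntervalIntegrable (fun x ↦ (f x : ℂ)) volume a b :=
  ⟨hf.1.ofReal, hf.2.ofReal⟩

section NormedSpace

variable {E : Type*} [NormedAddCommGroup E] [NormedSpace ℝ E]

theorem MeasureTheory.LocallyIntegrable.absolutelyContinuousOnInterval_of_eq_add_integral
    {f g : ℝ → E} {x₀ : ℝ} (hf : LocallyIntegrable f volume)
    (hg : ∀ x, g x = g x₀ + ∫ t in x₀..x, f t)
    (a b : ℝ) : AbsolutelyContinuousOnInterval g a b := by
  refine ((hf.intervalIntegrable a b).norm.absolutelyContinuousOnInterval_intervalIntegral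
    (c := a) left_mem_uIcc).of_dist_le fun x y ↦ ?_
  rw [dist_eq_norm, dist_eq_norm, hg x, hg y, add_sub_add_left_eq_sub,
    integral_interval_sub_left (hf.intervalIntegrable _ _) (hf.intervalIntegrable _ _),
    integral_interval_sub_left (hf.intervalIntegrable _ _).norm (hf.intervalIntegrable _ _).norm,
    Real.norm_eq_abs]
  exact norm_integral_le_abs_integral_norm

theorem eq_add_integral_of_hasDerivAt [CompleteSpace E] {φ φ' : ℝ → E}
    (hφ : ∀ x, HasDerivAt φ (φ' x) x) (hφ' : Continuous φ') (x₀ x : ℝ) :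
    φ x = φ x₀ + ∫ t in x₀..x, φ' t := by
  rw [integral_eq_sub_of_hasDerivAt (fun t _ ↦ hφ t) (hφ'.intervalIntegrable _ _),
    add_sub_cancel]

theorem eq_zero_of_tendsto_add_smul {a d L : E}
    (h : Tendsto (fun x : ℝ ↦ a + x • d) atTop (𝓝 L)) : d = 0 := by
  have hslope : Tendsto (fun x : ℝ ↦ x⁻¹ • (a + x • d - a)) atTop (𝓝 ((0 : ℝ) • (L - a))) :=
    tendsto_inv_atTop_zero.smul (h.sub_const a)
  rw [zero_smul] at hslope
  refine tendsto_nhds_unique tendsto_const_nhds (hslope.congr' ?_)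
  filter_upwards [eventually_ne_atTop 0] with x hx
  rw [add_sub_cancel_left, inv_smul_smul₀ hx]

end NormedSpace

theorem integral_mul_add_mul_eq_sub_of_eq_add_integral {φ φ' g g' : ℝ → ℂ} {x₀ : ℝ}
    (hφ : ∀ x, HasDerivAt φ (φ' x) x) (hφ' : Continuous φ') (hg' : LocallyIntegrable g' volume)
    (hg : ∀ x, g x = g x₀ + ∫ t in x₀..x, g' t) (a b : ℝ) :
    ∫ x in a..b, (φ' x * g x + φ x * g' x) = φ b * g b - φ a * g a := by
  have hg_cont : Continuous g :=
    (continuous_const.add (continuous_primitive hg'.intervalIntegrable x₀)).congr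
      fun x ↦ (hg x).symm
  have hint : LocallyIntegrable (fun x ↦ φ' x * g x + φ x * g' x) volume :=
    (hφ'.mul hg_cont).locallyIntegrable.add
      (hg'.continuous_mul (continuous_iff_continuousAt.2 fun x ↦ (hφ x).continuousAt))
  set H := fun x ↦ φ x * g x - ∫ t in a..x, (φ' t * g t + φ t * g' t)
  have hH_ac : AbsolutelyContinuousOnInterval H a b :=
    ((hφ'.locallyIntegrable.absolutelyContinuousOnInterval_of_eq_add_integral
      (eq_add_integral_of_hasDerivAt hφ hφ' a) a b).fun_smul
      (hg'.absolutelyContinuousOnInterval_of_eq_add_integral hg a b)).fun_sub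
      (hint.absolutelyContinuousOnInterval_of_eq_add_integral (x₀ := a) (by simp) a b)
  have hH' : ∀ᵐ x, x ∈ uIcc a b → HasDerivAt H 0 x := by
    filter_upwards [LocallyIntegrable.ae_hasDerivAt_integral hg',
      LocallyIntegrable.ae_hasDerivAt_integral hint] with x hg'x hintx _
    have hgx : HasDerivAt g (g' x) x :=
      (zero_add (g' x) ▸ (hasDerivAt_const x (g x₀)).add (hg'x x₀)).congr_of_eventuallyEq
        (Eventually.of_forall hg)
    have hHx := ((hφ x).fun_mul hgx).fun_sub (hintx a)
    rwa [sub_self] at hHx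
  obtain ⟨C, hC⟩ := hH_ac.const_of_ae_hasDerivAt_zero hH'
  have hHa := hC a left_mem_uIcc
  have hHb := hC b right_mem_uIcc
  simp only [H, integral_same, sub_zero] at hHa hHb
  linear_combination hHa - hHb

theorem Complex.not_tendsto_exp_I_mul {k : ℂ} (hk : k.im = 0) (hk0 : k ≠ 0) (L : ℂ) :
    ¬ Tendsto (fun x : ℝ ↦ exp (I * k * x)) atTop (𝓝 L) := by
  intro hL
  obtain ⟨r, rfl⟩ : ∃ r : ℝ, k = r := ⟨k.re, Complex.ext rfl (by simp [hk])⟩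
  have hr : r ≠ 0 := by exact_mod_cast hk0
  have hnorm : ‖L‖ = 1 :=
    tendsto_nhds_unique hL.norm (tendsto_const_nhds.congr fun x ↦ by simp [norm_exp])
  have hshift : ∀ x : ℝ, exp (I * r * ↑(x + Real.pi / r)) = -exp (I * r * x) := fun x ↦ by
    rw [show I * r * ↑(x + Real.pi / r) = I * r * x + Real.pi * I by push_cast; field_simp,
      exp_add, exp_pi_mul_I, mul_neg_one]
  have hneg : L = -L := tendsto_nhds_unique
    ((hL.comp (tendsto_atTop_add_const_right _ _ tendsto_id)).congr fun x ↦ hshift x) hL.neg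
  have : L = 0 := by linear_combination hneg / 2
  simp [this] at hnorm

theorem eq_mul_conj_of_im_conj_mul_deriv_eq_zero {u : ℝ → ℂ} {A : ℝ} (hu : Differentiable ℝ u)
    (hne : ∀ x ≥ A, u x ≠ 0) (him : ∀ x ≥ A, (conj (u x) * deriv u x).im = 0) :
    ∀ x ≥ A, u x = u A / conj (u A) * conj (u x) := by
  intro b hb
  have hconj_ne : ∀ x ≥ A, conj (u x) ≠ 0 := fun x hx ↦ by simpa using hne x hx
  have hconst := constant_of_has_deriv_right_zero (f := fun x ↦ u x / conj (u x)) (a := A) (b := b)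
    (hu.continuous.continuousOn.div (hu.continuous.star.continuousOn) fun x hx ↦ hconj_ne x hx.1)
    fun x hx ↦ by
      have hder := (hu x).hasDerivAt.fun_div (hu x).hasDerivAt.star (hconj_ne x hx.1)
      simp only [Complex.star_def] at hder
      have hW : deriv u x * conj (u x) - u x * conj (deriv u x) = 0 := by
        have := Complex.sub_conj (conj (u x) * deriv u x)
        rw [him x hx.1] at this
        simpa [mul_comm] using this
      rw [hW, zero_div] at hder
      exact hder.hasDerivWithinAt
  exact (div_eq_iff (hconj_ne b hb)).1 (hconst b (right_mem_Icc.2 hb))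

theorem intervalIntegral_pos_of_nonneg_of_ae_ne_zero {f : ℝ → ℝ} {a b : ℝ} (hab : a < b)
    (hfi : IntervalIntegrable f volume a b) (hf : ∀ x, 0 ≤ f x)
    (hne : ∀ᵐ x, x ∈ Ioo a b → f x ≠ 0) : 0 < ∫ x in a..b, f x := by
  rw [integral_pos_iff_support_of_nonneg_ae (Eventually.of_forall hf) hfi]
  refine ⟨hab, lt_of_lt_of_le (b := volume (Ioo a b)) (by simpa using hab) (measure_mono_ae ?_)⟩
  filter_upwards [hne] with x hx hxI
  exact ⟨hx hxI, Ioo_subset_Ioc_self hxI⟩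

theorem Complex.max_abs_im_neg_re_mul_le_norm_sub (z : ℂ) {P Q : ℝ} (hP : 0 ≤ P) (hQ : 0 ≤ Q) :
    max |z.im| (-z.re) * Q ≤ ‖(P : ℂ) - z * Q‖ := by
  rcases le_total |z.im| (-z.re) with h | h
  · rw [max_eq_right h]
    refine le_trans ?_ (re_le_norm _)
    simp only [sub_re, ofReal_re, mul_re, ofReal_im, mul_zero, sub_zero]
    nlinarith
  · rw [max_eq_left h]
    refine le_trans ?_ (abs_im_le_norm _)
    simp [abs_mul, abs_of_nonneg hQ]

theorem Complex.zero_lt_max_abs_im_neg_re_sq {k : ℂ} (hk : 0 < k.im) :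
    0 < max |(k ^ 2).im| (-(k ^ 2).re) := by
  rcases eq_or_ne k.re 0 with h | h
  · exact lt_max_of_lt_right (by simp [sq, h]; positivity)
  · refine lt_max_of_lt_left (abs_pos.2 ?_)
    simpa [sq, ← two_mul, mul_comm k.im] using And.intro h hk.ne'

section Helmholtz

variable {c : ℝ → ℝ} {k : ℂ} {u : ℝ → ℂ} {c₀ : ℝ}

theorem ae_norm_helmholtz_source_le (hc₀ : 0 < c₀) (hc : ∀ᵐ x, c₀ < c x) :
    ∀ᵐ x, ‖-(k ^ 2 / ((c x : ℂ) ^ 2)) * u x‖ ≤ ‖k‖ ^ 2 / c₀ ^ 2 * ‖u x‖ := by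
  filter_upwards [hc] with x hx
  rw [norm_mul, norm_neg, norm_div, norm_pow, norm_pow, Complex.norm_real, Real.norm_eq_abs,
    abs_of_pos (hc₀.trans hx)]
  gcongr

theorem aestronglyMeasurable_helmholtz_source (hmeas : Measurable c) (hu : Continuous u) :
    AEStronglyMeasurable (fun x ↦ -(k ^ 2 / ((c x : ℂ) ^ 2)) * u x) volume :=
  (Measurable.mul (by fun_prop) hu.measurable).aestronglyMeasurable

theorem locallyIntegrable_helmholtz_source (hmeas : Measurable c) (hc₀ : 0 < c₀)
    (hc : ∀ᵐ x, c₀ < c x) (hu : Continuous u) :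
    LocallyIntegrable (fun x ↦ -(k ^ 2 / ((c x : ℂ) ^ 2)) * u x) volume :=
  (continuous_const.mul hu.norm).locallyIntegrable.mono
    (aestronglyMeasurable_helmholtz_source hmeas hu)
    ((ae_norm_helmholtz_source_le hc₀ hc).mono fun _ hx ↦ hx.trans (le_abs_self _))

theorem locallyIntegrable_sq_norm_div_sq (hmeas : Measurable c) (hc₀ : 0 < c₀)
    (hc : ∀ᵐ x, c₀ < c x) (hu : Continuous u) :
    LocallyIntegrable (fun x ↦ ‖u x‖ ^ 2 / c x ^ 2) volume := by
  refine (show Continuous fun x ↦ ‖u x‖ ^ 2 / c₀ ^ 2 by fun_prop).locallyIntegrable.mono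
    (Measurable.div (by fun_prop) (by fun_prop)).aestronglyMeasurable ?_
  filter_upwards [hc] with x hx
  rw [Real.norm_of_nonneg (by positivity), Real.norm_of_nonneg (by positivity)]
  gcongr

theorem SolvesHelmholtz.conj_mul_deriv_sub_conj_mul_deriv (hu : SolvesHelmholtz c k u)
    (hmeas : Measurable c) (hc₀ : 0 < c₀) (hc : ∀ᵐ x, c₀ < c x) (a b : ℝ) :
    conj (u b) * deriv u b - conj (u a) * deriv u a =
      ((∫ x in a..b, ‖deriv u x‖ ^ 2 : ℝ) : ℂ) -
        k ^ 2 * ((∫ x in a..b, ‖u x‖ ^ 2 / c x ^ 2 : ℝ) : ℂ) := by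
  have hu' : Continuous (deriv u) := hu.1.continuous_deriv_one
  have hconj : ∀ x, HasDerivAt (fun x ↦ conj (u x)) (conj (deriv u x)) x := fun x ↦
    ((hu.1.differentiable one_ne_zero x).hasDerivAt).star
  have hp :=
    (show Continuous fun x ↦ ‖deriv u x‖ ^ 2 by fun_prop).intervalIntegrable (μ := volume) a b
  have hq := (locallyIntegrable_sq_norm_div_sq hmeas hc₀ hc hu.1.continuous).intervalIntegrable a b
  rw [← integral_mul_add_mul_eq_sub_of_eq_add_integral hconj (Complex.continuous_conj.comp hu')
    (locallyIntegrable_helmholtz_source hmeas hc₀ hc hu.1.continuous) (hu.2 0) a b,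
    ← integral_ofReal, ← integral_ofReal, ← intervalIntegral.integral_const_mul,
    ← integral_sub hp.ofReal (hq.ofReal.const_mul _)]
  refine integral_congr fun x _ ↦ ?_
  push_cast
  linear_combination Complex.conj_mul' (deriv u x) - k ^ 2 / (c x : ℂ) ^ 2 * Complex.conj_mul' (u x)

theorem eventually_ne_zero_of_tendsto_exp_mul
    (hlim : Tendsto (fun x : ℝ ↦ Complex.exp (-(Complex.I * k * x)) * u x) atTop (𝓝 1)) :
    ∀ᶠ x in atTop, u x ≠ 0 :=
  (hlim.eventually_ne one_ne_zero).mono fun _ hx ↦ right_ne_zero_of_mul hx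

theorem eventually_norm_le_of_tendsto_exp_mul
    (hlim : Tendsto (fun x : ℝ ↦ Complex.exp (-(Complex.I * k * x)) * u x) atTop (𝓝 1)) :
    ∀ᶠ x in atTop, ‖u x‖ ≤ 2 * Real.exp (-k.im * x) := by
  filter_upwards [hlim.norm.eventually (eventually_le_nhds (by norm_num : ‖(1 : ℂ)‖ < 2))]
    with x hx
  rw [norm_mul, Complex.norm_exp] at hx
  calc ‖u x‖ = Real.exp (-k.im * x) * (Real.exp (k.im * x) * ‖u x‖) := by
        rw [← mul_assoc, ← Real.exp_add, neg_mul, neg_add_cancel, Real.exp_zero, one_mul]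
    _ ≤ Real.exp (-k.im * x) * 2 := by
        gcongr
        simpa using hx
    _ = 2 * Real.exp (-k.im * x) := mul_comm _ _

theorem SolvesHelmholtz.tendsto_conj_mul_deriv (hu : SolvesHelmholtz c k u)
    (hlim : Tendsto (fun x : ℝ ↦ Complex.exp (-(Complex.I * k * x)) * u x) atTop (𝓝 1))
    (hmeas : Measurable c) (hc₀ : 0 < c₀) (hc : ∀ᵐ x, c₀ < c x) (hk : 0 < k.im) :
    Tendsto (fun x ↦ conj (u x) * deriv u x) atTop (𝓝 0) := by
  obtain ⟨A, hA⟩ := eventually_atTop.1 (eventually_norm_le_of_tendsto_exp_mul hlim)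
  have hsource : IntegrableOn (fun x ↦ -(k ^ 2 / ((c x : ℂ) ^ 2)) * u x) (Ioi A) volume := by
    refine (((exp_neg_integrableOn_Ioi A hk).const_mul 2).const_mul (‖k‖ ^ 2 / c₀ ^ 2)).mono'
      (aestronglyMeasurable_helmholtz_source hmeas hu.1.continuous).restrict ?_
    filter_upwards [ae_restrict_mem measurableSet_Ioi,
      ae_restrict_of_ae (ae_norm_helmholtz_source_le hc₀ hc)] with x hxA hx
    exact hx.trans (by gcongr; exact hA x hxA.le)
  have hderiv : Tendsto (deriv u) atTop
      (𝓝 (deriv u A + ∫ x in Ioi A, -(k ^ 2 / ((c x : ℂ) ^ 2)) * u x)) :=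
    ((intervalIntegral_tendsto_integral_Ioi A hsource tendsto_id).const_add _).congr
      fun b ↦ (hu.2 A b).symm
  have hu0 : Tendsto u atTop (𝓝 0) := by
    refine squeeze_zero_norm' (eventually_atTop.2 ⟨A, hA⟩) ?_
    simpa using (Real.tendsto_exp_atBot.comp
      (tendsto_id.const_mul_atTop_of_neg (neg_neg_of_pos hk))).const_mul 2
  simpa using ((Complex.continuous_conj.tendsto 0).comp hu0).mul hderiv

theorem IsJostPlus.ne_zero_of_im_pos (hu : IsJostPlus c k u) (hmeas : Measurable c)
    (hc₀ : 0 < c₀) (hc : ∀ᵐ x, c₀ < c x) (hk : 0 < k.im) (x₀ : ℝ) : u x₀ ≠ 0 := by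
  intro hx₀
  obtain ⟨A, hA⟩ := eventually_atTop.1
    ((eventually_ne_zero_of_tendsto_exp_mul hu.2).and (eventually_ge_atTop x₀))
  have hq := locallyIntegrable_sq_norm_div_sq hmeas hc₀ hc hu.1.1.continuous
  have hq_nonneg : ∀ x, 0 ≤ ‖u x‖ ^ 2 / c x ^ 2 := fun x ↦ by positivity
  have hQ : 0 < ∫ x in A..A + 1, ‖u x‖ ^ 2 / c x ^ 2 := by
    refine intervalIntegral_pos_of_nonneg_of_ae_ne_zero (by linarith) (hq.intervalIntegrable _ _)
      hq_nonneg ?_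
    filter_upwards [hc] with x hcx hx
    exact div_ne_zero (pow_ne_zero _ (norm_ne_zero_iff.2 (hA x hx.1.le).1))
      (pow_ne_zero _ (hc₀.trans hcx).ne')
  have hbound : ∀ b ≥ A + 1, max |(k ^ 2).im| (-(k ^ 2).re) * ∫ x in A..A + 1, ‖u x‖ ^ 2 / c x ^ 2
      ≤ ‖conj (u b) * deriv u b‖ := by
    intro b hb
    have hgreen := hu.1.conj_mul_deriv_sub_conj_mul_deriv hmeas hc₀ hc x₀ b
    rw [hx₀, map_zero, zero_mul, sub_zero] at hgreen
    have hx₀A := (hA A le_rfl).2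
    rw [hgreen]
    refine le_trans (mul_le_mul_of_nonneg_left ?_ (le_max_of_le_left (abs_nonneg _)))
      (Complex.max_abs_im_neg_re_mul_le_norm_sub _
        (integral_nonneg (by linarith) fun _ _ ↦ by positivity)
        (integral_nonneg (by linarith) fun x _ ↦ hq_nonneg x))
    exact integral_mono_interval hx₀A (by linarith) hb (Eventually.of_forall hq_nonneg)
      (hq.intervalIntegrable _ _)
  have hlim := (hu.1.tendsto_conj_mul_deriv hu.2 hmeas hc₀ hc hk).norm
  rw [norm_zero] at hlim
  exact (mul_pos (Complex.zero_lt_max_abs_im_neg_re_sq hk) hQ).not_ge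
    (ge_of_tendsto hlim (eventually_atTop.2 ⟨A + 1, hbound⟩))

theorem IsJostPlus.ne_zero_of_im_eq_zero (hu : IsJostPlus c k u) (hmeas : Measurable c)
    (hc₀ : 0 < c₀) (hc : ∀ᵐ x, c₀ < c x) (hk : k.im = 0) (hk0 : k ≠ 0) (x₀ : ℝ) : u x₀ ≠ 0 := by
  intro hx₀
  obtain ⟨A, hA⟩ := eventually_atTop.1 (eventually_ne_zero_of_tendsto_exp_mul hu.2)
  have him : ∀ x, (conj (u x) * deriv u x).im = 0 := fun x ↦ by
    have hgreen := hu.1.conj_mul_deriv_sub_conj_mul_deriv hmeas hc₀ hc x₀ x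
    rw [hx₀, map_zero, zero_mul, sub_zero] at hgreen
    simp [hgreen, sq, hk]
  obtain ⟨ω, hω, hratio⟩ : ∃ ω ≠ 0, ∀ x ≥ A, u x = ω * conj (u x) :=
    ⟨_, div_ne_zero (hA A le_rfl) (by simpa using hA A le_rfl),
      eq_mul_conj_of_im_conj_mul_deriv_eq_zero (hu.1.1.differentiable one_ne_zero) hA
        fun x _ ↦ him x⟩
  have hkconj : conj k = k := Complex.conj_eq_iff_im.2 hk
  have hconj : Tendsto (fun x : ℝ ↦ Complex.exp (Complex.I * k * x) * u x) atTop (𝓝 ω) := by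
    have := ((Complex.continuous_conj.tendsto 1).comp hu.2).const_mul ω
    rw [Function.comp_def, map_one, mul_one] at this
    refine this.congr' ?_
    filter_upwards [eventually_ge_atTop A] with x hx
    conv_rhs => rw [hratio x hx]
    rw [map_mul, ← Complex.exp_conj]
    simp only [map_neg, map_mul, Complex.conj_I, hkconj, Complex.conj_ofReal]
    ring_nf
  refine Complex.not_tendsto_exp_I_mul (k := -2 * k) (by simp [hk]) (by simpa using hk0) ω⁻¹ ?_
  refine (one_div ω ▸ hu.2.div hconj hω).congr' ?_
  filter_upwards [eventually_ge_atTop A] with x hx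
  rw [Pi.div_apply, div_eq_iff (mul_ne_zero (Complex.exp_ne_zero _) (hA x hx)), ← mul_assoc,
    ← Complex.exp_add]
  ring_nf

theorem IsJostPlus.eq_one_of_zero (hu : IsJostPlus c 0 u) (x : ℝ) : u x = 1 := by
  have hderiv : ∀ x, deriv u x = deriv u 0 := fun x ↦ by simpa using hu.1.2 0 x
  have haffine : ∀ x, u x = u 0 + x • deriv u 0 := fun x ↦ by
    rw [eq_add_integral_of_hasDerivAt (fun x ↦ (hu.1.1.differentiable one_ne_zero x).hasDerivAt)
      hu.1.1.continuous_deriv_one 0 x, integral_congr fun t _ ↦ hderiv t,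
      intervalIntegral.integral_const, sub_zero]
  have hlim : Tendsto u atTop (𝓝 1) := by simpa using hu.2
  have hslope : deriv u 0 = 0 := eq_zero_of_tendsto_add_smul (hlim.congr haffine)
  have hconst : ∀ x, u x = u 0 := fun x ↦ by rw [haffine x, hslope, smul_zero, add_zero]
  rw [hconst x]
  exact tendsto_nhds_unique (tendsto_const_nhds.congr fun y ↦ (hconst y).symm) hlim

end Helmholtz

theorem jost_plus_ne_zero_general (c : ℝ → ℝ) (hmeas : Measurable c)
    (h1 : HypH1 c) (k : ℂ) (hk : 0 ≤ k.im)
    (u₁ : ℝ → ℂ) (hu : IsJostPlus c k u₁) :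
    ∀ x : ℝ, u₁ x ≠ 0 := by
  obtain ⟨c₀, hc₀, _, _, hc⟩ := h1
  have hc₀_lt : ∀ᵐ x, c₀ < c x := hc.mono fun _ hx ↦ hx.1
  intro x₀
  rcases hk.lt_or_eq with hk | hk
  · exact hu.ne_zero_of_im_pos hmeas hc₀ hc₀_lt hk x₀
  rcases eq_or_ne k 0 with rfl | hk0
  · exact hu.eq_one_of_zero x₀ ▸ one_ne_zero
  · exact hu.ne_zero_of_im_eq_zero hmeas hc₀ hc₀_lt hk.symm hk0 x₀

/-- The Jost solution from `+∞` never vanishes. -/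
theorem jost_plus_ne_zero (c : ℝ → ℝ) (hmeas : Measurable c)
    (h1 : HypH1 c) (h2 : HypH2 c) (k : ℂ) (hk : 0 ≤ k.im)
    (u₁ : ℝ → ℂ) (hu : IsJostPlus c k u₁) :
    ∀ x : ℝ, u₁ x ≠ 0 :=
  jost_plus_ne_zero_general c hmeas h1 k hk u₁ hu
end
end

section
/- Let c satisfy [H1] and [H2], let k ∈ ℂ with Im k > 0, and let u₁ be the Jost solution from +∞ at k (which is nowhere vanishing). Then for every x ∈ ℝ, Re( u₁'(x) / (i k u₁(x)) ) = (Im k / (|k|² |u₁(x)|²)) · ∫ₓ^∞ ( |k|² |u₁(y)|² / c(y)² + |u₁'(y)|² ) dy; in particular Re( u₁'(x)/(i k u₁(x)) ) > 0. -/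
open MeasureTheory Filter Topology

noncomputable section

/-!
Write `v = u₁'`. The equation gives `(conj u₁ · v)' = |v|² - (k²/c²)|u₁|²` in integrated form
(integration by parts against a primitive of an integrable function, i.e. Fubini on a triangle),
so the flux `Im(conj k · conj u₁ · v)` has derivative `-Im k · (|k|²|u₁|²/c² + |v|²)`.
For `Im k > 0` the Jost condition makes `u₁` decay like `e^{-(Im k) x}`, hence `(k²/c²) u₁` is
integrable at `+∞`, `v` has a limit there and the flux tends to `0`. Integrating from `x` to `+∞`
expresses the flux at `x` through the integral of the nonnegative energy density, which is
therefore integrable and, as `u₁ ≠ 0` and `c > 0` a.e., positive. Finally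
`Re(v/(ik u₁)) = flux / (|k|²|u₁|²)`.
-/

open Set Complex ComplexConjugate Interval

section IntegrationByParts

variable {𝕜 : Type*} [RCLike 𝕜]

theorem setIntegral_Ioc_mul_primitive_swap {f g : ℝ → 𝕜} {a b : ℝ}
    (hg : IntegrableOn g (Ioc a b)) (hf : IntegrableOn f (Ioc a b)) :
    ∫ t in Ioc a b, g t * ∫ y in Ioc a t, f y =
      ∫ y in Ioc a b, (∫ t in Ioc y b, g t) * f y := by
  set F : ℝ × ℝ → 𝕜 := {p | p.2 ≤ p.1}.indicator fun p => g p.1 * f p.2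
  have hF : Integrable F ((volume.restrict (Ioc a b)).prod (volume.restrict (Ioc a b))) :=
    (hg.mul_prod hf).indicator (measurableSet_le measurable_snd measurable_fst)
  convert integral_integral_swap (f := fun t y => F (t, y)) hF using 1
  · refine setIntegral_congr_fun measurableSet_Ioc fun t ht => ?_
    rw [show (fun y => F (t, y)) = (Iic t).indicator (fun y => g t * f y) from rfl,
      setIntegral_indicator measurableSet_Iic, Ioc_inter_Iic, min_eq_right ht.2,
      integral_const_mul]
  · refine setIntegral_congr_fun measurableSet_Ioc fun y hy => ?_
    rw [show (fun t => F (t, y)) = (Ici y).indicator (fun t => g t * f y) from rfl,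
      setIntegral_indicator measurableSet_Ici, integral_mul_const,
      ← integral_Icc_eq_integral_Ioc]
    congr 3
    ext t
    simp only [mem_inter_iff, mem_Ioc, mem_Ici, mem_Icc]
    exact ⟨fun ⟨hyt, htb⟩ => ⟨⟨hy.1.trans_le hyt, htb⟩, hyt⟩, fun ⟨⟨_, htb⟩, hyt⟩ => ⟨hyt, htb⟩⟩

theorem intervalIntegral_mul_primitive_swap {f g : ℝ → 𝕜} {a b : ℝ} (hab : a ≤ b)
    (hg : IntervalIntegrable g volume a b) (hf : IntervalIntegrable f volume a b) :
    ∫ t in a..b, g t * ∫ y in a..t, f y = ∫ y in a..b, (∫ t in y..b, g t) * f y := by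
  rw [intervalIntegrable_iff_integrableOn_Ioc_of_le hab] at hf hg
  simp only [intervalIntegral.integral_of_le hab]
  convert setIntegral_Ioc_mul_primitive_swap hg hf using 1
  · refine setIntegral_congr_fun measurableSet_Ioc fun t ht => ?_
    rw [intervalIntegral.integral_of_le ht.1.le]
  · refine setIntegral_congr_fun measurableSet_Ioc fun y hy => ?_
    rw [intervalIntegral.integral_of_le hy.2]

theorem integral_deriv_mul_add_mul_eq_sub {U U' V f : ℝ → 𝕜} {a b : ℝ} (hab : a ≤ b)
    (hU : ∀ x, HasDerivAt U (U' x) x) (hU' : Continuous U')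
    (hV : ∀ y, V y = V a + ∫ t in a..y, f t) (hf : IntervalIntegrable f volume a b) :
    ∫ x in a..b, (U' x * V x + U x * f x) = U b * V b - U a * V a := by
  have hftc : ∀ y, ∫ t in y..b, U' t = U b - U y := fun y =>
    intervalIntegral.integral_eq_sub_of_hasDerivAt (fun t _ => hU t) (hU'.intervalIntegrable _ _)
  have hW : ContinuousOn (fun y => ∫ t in a..y, f t) [[a, b]] :=
    intervalIntegral.continuousOn_primitive_interval' hf left_mem_uIcc
  have hU'W : IntervalIntegrable (fun y => U' y * ∫ t in a..y, f t) volume a b :=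
    (hU'.continuousOn.mul hW).intervalIntegrable
  have hUf : IntervalIntegrable (fun y => U y * f y) volume a b :=
    hf.continuousOn_mul (fun y _ => (hU y).continuousAt.continuousWithinAt)
  have hU'Va : IntervalIntegrable (fun y => U' y * V a) volume a b :=
    (hU'.mul continuous_const).intervalIntegrable _ _
  have hswap := intervalIntegral_mul_primitive_swap hab (hU'.intervalIntegrable a b) hf
  simp only [hftc, sub_mul] at hswap
  rw [intervalIntegral.integral_sub (hf.const_mul _) hUf, intervalIntegral.integral_const_mul]
    at hswap
  calc ∫ x in a..b, (U' x * V x + U x * f x)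
      = ∫ x in a..b, (U' x * V a + U' x * (∫ t in a..x, f t) + U x * f x) := by
        simp only [← mul_add, ← hV]
    _ = (∫ x in a..b, U' x * V a) + (∫ x in a..b, U' x * ∫ t in a..x, f t)
          + ∫ x in a..b, U x * f x := by
        rw [intervalIntegral.integral_add (hU'Va.add hU'W) hUf,
          intervalIntegral.integral_add hU'Va hU'W]
    _ = U b * V b - U a * V a := by
        rw [hswap, intervalIntegral.integral_mul_const, hftc, hV b]
        ring

end IntegrationByParts

theorem setIntegral_pos_of_ae_pos {X : Type*} [MeasurableSpace X] {μ : Measure X} {s : Set X}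
    {f : X → ℝ} (hs : μ s ≠ 0) (hf : ∀ᵐ x ∂μ.restrict s, 0 < f x) (hfi : IntegrableOn f s μ) :
    0 < ∫ x in s, f x ∂μ := by
  have hnonneg : 0 ≤ᵐ[μ.restrict s] f := hf.mono fun x hx => hx.le
  refine (integral_nonneg_of_ae hnonneg).lt_of_ne fun h => hs ?_
  have h0 := (integral_eq_zero_iff_of_nonneg_ae hnonneg hfi).1 h.symm
  rw [← Measure.restrict_eq_zero, ← ae_eq_bot, ← eventually_false_iff_eq_bot]
  filter_upwards [hf, h0] with x h1 h2 using h1.ne' h2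

theorem re_div_I_mul_mul (k u v : ℂ) :
    (v / (I * k * u)).re = (conj k * (conj u * v)).im / (‖k‖ ^ 2 * ‖u‖ ^ 2) := by
  simp only [div_re, mul_re, mul_im, conj_re, conj_im, I_re, I_im, normSq_mul, normSq_I,
    ← normSq_eq_norm_sq]
  ring

theorem im_conj_mul_helmholtz (k u v : ℂ) (r : ℝ) :
    (conj k * (conj v * v + conj u * (-(k ^ 2 / (r : ℂ) ^ 2) * u))).im =
      -k.im * (‖k‖ ^ 2 * ‖u‖ ^ 2 / r ^ 2 + ‖v‖ ^ 2) := by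
  have h : conj k * (conj v * v + conj u * (-(k ^ 2 / (r : ℂ) ^ 2) * u)) =
      ((‖v‖ ^ 2 : ℝ) : ℂ) * conj k - ((‖k‖ ^ 2 * ‖u‖ ^ 2 / r ^ 2 : ℝ) : ℂ) * k := by
    push_cast
    rw [← conj_mul' v, ← conj_mul' u, ← conj_mul' k]
    ring
  rw [h, sub_im, im_ofReal_mul, im_ofReal_mul, conj_im]
  ring

section Helmholtz

variable {c : ℝ → ℝ} {k : ℂ} {u : ℝ → ℂ}

def flux (k : ℂ) (u : ℝ → ℂ) (x : ℝ) : ℝ :=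
  (conj k * (conj (u x) * deriv u x)).im

def energyDensity (c : ℝ → ℝ) (k : ℂ) (u : ℝ → ℂ) (y : ℝ) : ℝ :=
  ‖k‖ ^ 2 * ‖u y‖ ^ 2 / (c y) ^ 2 + ‖deriv u y‖ ^ 2

theorem SolvesHelmholtz.hasDerivAt (hu : SolvesHelmholtz c k u) (x : ℝ) :
    HasDerivAt u (deriv u x) x :=
  (hu.1.differentiable one_ne_zero x).hasDerivAt

theorem SolvesHelmholtz.continuous_deriv (hu : SolvesHelmholtz c k u) : Continuous (deriv u) :=
  hu.1.continuous_deriv le_rfl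

theorem SolvesHelmholtz.flux_sub_flux (hu : SolvesHelmholtz c k u) {a b : ℝ} (hab : a ≤ b)
    (hf : IntervalIntegrable (fun y => -(k ^ 2 / (c y : ℂ) ^ 2) * u y) volume a b) :
    flux k u b - flux k u a = -k.im * ∫ y in a..b, energyDensity c k u y := by
  have hibp := integral_deriv_mul_add_mul_eq_sub hab (fun x => (hu.hasDerivAt x).star)
    (continuous_star.comp hu.continuous_deriv) (hu.2 a) hf
  simp only [star_def] at hibp
  have hint : IntervalIntegrable (fun y => conj k * (conj (deriv u y) * deriv u y
      + conj (u y) * (-(k ^ 2 / (c y : ℂ) ^ 2) * u y))) volume a b :=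
    ((((continuous_conj.comp hu.continuous_deriv).mul hu.continuous_deriv).intervalIntegrable
      a b).add (hf.continuousOn_mul (continuous_conj.comp hu.1.continuous).continuousOn)).const_mul
      _
  calc flux k u b - flux k u a
      = (conj k * (conj (u b) * deriv u b - conj (u a) * deriv u a)).im := by
        simp only [flux, mul_sub, sub_im]
    _ = ∫ y in a..b, (conj k * (conj (deriv u y) * deriv u y
          + conj (u y) * (-(k ^ 2 / (c y : ℂ) ^ 2) * u y))).im := by
        rw [← hibp, ← intervalIntegral.integral_const_mul]
        exact (intervalIntegral.intervalIntegral_im hint).symm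
    _ = -k.im * ∫ y in a..b, energyDensity c k u y := by
        simp only [im_conj_mul_helmholtz, energyDensity, intervalIntegral.integral_const_mul]

theorem IsJostPlus.isBigO_exp (hu : IsJostPlus c k u) :
    u =O[atTop] fun x : ℝ => cexp (I * k * x) := by
  have h := (Asymptotics.isBigO_refl (fun x : ℝ => cexp (I * k * x)) atTop).mul
    (hu.2.isBigO_one ℂ)
  simp only [mul_one] at h
  refine h.congr_left fun x => ?_
  rw [← mul_assoc, ← Complex.exp_add, add_neg_cancel, Complex.exp_zero, one_mul]

theorem IsJostPlus.integrableOn_Ioi (hu : IsJostPlus c k u) (hk : 0 < k.im) (x : ℝ) :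
    IntegrableOn u (Ioi x) := by
  have hexp : IntegrableAtFilter (fun x : ℝ => cexp (I * k * x)) atTop :=
    ⟨Ioi x, Ioi_mem_atTop x, integrableOn_exp_mul_complex_Ioi (by simpa using hk) x⟩
  exact (hu.1.1.continuous.locallyIntegrable.locallyIntegrableOn _ |>.integrableOn_of_isBigO_atTop
    hu.isBigO_exp hexp).mono_set Ioi_subset_Ici_self

theorem IsJostPlus.tendsto_zero (hu : IsJostPlus c k u) (hk : 0 < k.im) :
    Tendsto u atTop (𝓝 0) := by
  refine hu.isBigO_exp.trans_tendsto (tendsto_zero_iff_norm_tendsto_zero.2 ?_)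
  simpa [Complex.norm_exp] using tendsto_id.const_mul_atTop hk

theorem integrableOn_helmholtz_potential_mul {c₀ : ℝ} {s : Set ℝ} (hmeas : Measurable c)
    (hc₀ : 0 < c₀) (hc : ∀ᵐ x, c₀ ≤ c x) (hu : IntegrableOn u s) :
    IntegrableOn (fun y => -(k ^ 2 / (c y : ℂ) ^ 2) * u y) s := by
  refine Integrable.mono' (hu.norm.const_mul (‖k‖ ^ 2 / c₀ ^ 2))
    ((by fun_prop : Measurable fun y => -(k ^ 2 / (c y : ℂ) ^ 2)).aestronglyMeasurable.mul
      hu.aestronglyMeasurable) (ae_restrict_of_ae ?_)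
  filter_upwards [hc] with y hy
  rw [norm_mul, norm_neg, norm_div, norm_pow, norm_pow, norm_real, Real.norm_eq_abs, sq_abs]
  gcongr

theorem SolvesHelmholtz.tendsto_deriv (hu : SolvesHelmholtz c k u) {x : ℝ}
    (hf : IntegrableOn (fun y => -(k ^ 2 / (c y : ℂ) ^ 2) * u y) (Ioi x)) :
    Tendsto (deriv u) atTop (𝓝 (deriv u x + ∫ y in Ioi x, -(k ^ 2 / (c y : ℂ) ^ 2) * u y)) :=
  ((intervalIntegral_tendsto_integral_Ioi x hf tendsto_id).const_add _).congr
    fun b => (hu.2 x b).symm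

theorem tendsto_flux_atTop {L : ℂ} (hu : Tendsto u atTop (𝓝 0))
    (hu' : Tendsto (deriv u) atTop (𝓝 L)) : Tendsto (flux k u) atTop (𝓝 0) := by
  have h := tendsto_const_nhds (x := conj k) |>.mul
    (((continuous_conj.tendsto 0).comp hu).mul hu')
  have h' := (continuous_im.tendsto _).comp h
  simp only [map_zero, zero_mul, mul_zero, zero_im] at h'
  exact h'

theorem SolvesHelmholtz.intervalIntegrable_energyDensity (hu : SolvesHelmholtz c k u) {a b : ℝ}
    (hf : IntervalIntegrable (fun y => -(k ^ 2 / (c y : ℂ) ^ 2) * u y) volume a b) :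
    IntervalIntegrable (energyDensity c k u) volume a b := by
  have h : energyDensity c k u =
      fun y => ‖-(k ^ 2 / (c y : ℂ) ^ 2) * u y‖ * ‖u y‖ + ‖deriv u y‖ ^ 2 := by
    ext y
    rw [energyDensity, norm_mul, norm_neg, norm_div, norm_pow, norm_pow, norm_real,
      Real.norm_eq_abs, sq_abs]
    ring
  rw [h]
  exact (hf.norm.mul_continuousOn hu.1.continuous.norm.continuousOn).add
    ((hu.continuous_deriv.norm.pow 2).intervalIntegrable a b)

theorem energyDensity_nonneg (y : ℝ) : 0 ≤ energyDensity c k u y := by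
  unfold energyDensity
  positivity

theorem energyDensity_pos {y : ℝ} (hk : k ≠ 0) (hu : u y ≠ 0) (hc : c y ≠ 0) :
    0 < energyDensity c k u y := by
  unfold energyDensity
  have := norm_pos_iff.2 hk
  have := norm_pos_iff.2 hu
  positivity

theorem SolvesHelmholtz.flux_eq_integral_Ioi (hu : SolvesHelmholtz c k u) (hk : 0 < k.im)
    {x : ℝ} (hf : IntegrableOn (fun y => -(k ^ 2 / (c y : ℂ) ^ 2) * u y) (Ioi x))
    (hu0 : Tendsto u atTop (𝓝 0)) :
    IntegrableOn (energyDensity c k u) (Ioi x) ∧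
      flux k u x = k.im * ∫ y in Ioi x, energyDensity c k u y := by
  have hfi : ∀ b, x ≤ b →
      IntervalIntegrable (fun y => -(k ^ 2 / (c y : ℂ) ^ 2) * u y) volume x b := fun b hb =>
    (intervalIntegrable_iff_integrableOn_Ioc_of_le hb).2 (hf.mono_set Ioc_subset_Ioi_self)
  have hlim : Tendsto (fun b => ∫ y in x..b, energyDensity c k u y) atTop
      (𝓝 (flux k u x / k.im)) := by
    have h := ((tendsto_flux_atTop (k := k) hu0 (hu.tendsto_deriv hf)).const_sub
      (flux k u x)).div_const k.im
    rw [sub_zero] at h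
    refine h.congr' ?_
    filter_upwards [eventually_ge_atTop x] with b hb
    have := hu.flux_sub_flux hb (hfi b hb)
    field_simp
    linarith
  have hint : IntegrableOn (energyDensity c k u) (Ioi x) := by
    refine integrableOn_Ioi_of_intervalIntegral_norm_tendsto _ x (fun b => ?_) tendsto_id
      (hlim.congr fun b => ?_)
    · rcases le_total x b with hb | hb
      · exact (hu.intervalIntegrable_energyDensity (hfi b hb)).1
      · simp [Ioc_eq_empty_of_le hb]
    · simp only [id, Real.norm_eq_abs, abs_of_nonneg (energyDensity_nonneg _)]
  refine ⟨hint, ?_⟩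
  rw [tendsto_nhds_unique (intervalIntegral_tendsto_integral_Ioi x hint tendsto_id) hlim]
  field_simp
end Helmholtz

theorem re_w_integral_formula_general (c : ℝ → ℝ) (hmeas : Measurable c)
    (h1 : HypH1 c) (k : ℂ) (hk : 0 < k.im)
    (u₁ : ℝ → ℂ) (hu : IsJostPlus c k u₁) (hne : ∀ x : ℝ, u₁ x ≠ 0) :
    ∀ x : ℝ,
      ((deriv u₁ x / (Complex.I * k * u₁ x)).re =
        k.im / (‖k‖ ^ 2 * ‖u₁ x‖ ^ 2) *
          ∫ y in Set.Ioi x,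
            (‖k‖ ^ 2 * ‖u₁ y‖ ^ 2 / (c y) ^ 2 + ‖deriv u₁ y‖ ^ 2)) ∧
      0 < (deriv u₁ x / (Complex.I * k * u₁ x)).re := by
  intro x
  obtain ⟨c₀, hc₀, _, -, hc⟩ := h1
  have hk0 : k ≠ 0 := by rintro rfl; simp at hk
  obtain ⟨hint, hflux⟩ := hu.1.flux_eq_integral_Ioi hk
    (integrableOn_helmholtz_potential_mul hmeas hc₀ (hc.mono fun y hy => hy.1.le)
      (hu.integrableOn_Ioi hk x)) (hu.tendsto_zero hk)
  have hpos : 0 < ∫ y in Ioi x, energyDensity c k u₁ y :=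
    setIntegral_pos_of_ae_pos (by simp) (ae_restrict_of_ae (hc.mono fun y hy =>
      energyDensity_pos hk0 (hne y) (hc₀.trans hy.1).ne')) hint
  have hre : (deriv u₁ x / (Complex.I * k * u₁ x)).re =
      k.im / (‖k‖ ^ 2 * ‖u₁ x‖ ^ 2) * ∫ y in Ioi x, energyDensity c k u₁ y := by
    rw [re_div_I_mul_mul, ← flux, hflux]
    ring
  refine ⟨hre, hre ▸ mul_pos (div_pos hk ?_) hpos⟩
  have := norm_pos_iff.2 hk0
  have := norm_pos_iff.2 (hne x)
  positivity

/-- For `Im k > 0`, the integral formula for `Re(u₁'/(ik u₁))`, and its positivity. -/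
theorem re_w_integral_formula (c : ℝ → ℝ) (hmeas : Measurable c)
    (h1 : HypH1 c) (h2 : HypH2 c) (k : ℂ) (hk : 0 < k.im)
    (u₁ : ℝ → ℂ) (hu : IsJostPlus c k u₁) (hne : ∀ x : ℝ, u₁ x ≠ 0) :
    ∀ x : ℝ,
      ((deriv u₁ x / (Complex.I * k * u₁ x)).re =
        k.im / (‖k‖ ^ 2 * ‖u₁ x‖ ^ 2) *
          ∫ y in Set.Ioi x,
            (‖k‖ ^ 2 * ‖u₁ y‖ ^ 2 / (c y) ^ 2 + ‖deriv u₁ y‖ ^ 2)) ∧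
      0 < (deriv u₁ x / (Complex.I * k * u₁ x)).re :=
  re_w_integral_formula_general c hmeas h1 k hk u₁ hu hne
end
end

section
/- Let c satisfy [H1] and [H2], let κ > 0, and let u₁ : ℝ → ℝ be the (real-valued) Jost solution from +∞ at k = iκ, i.e., u₁ is continuously differentiable with locally absolutely continuous derivative, u₁''(x) = (κ²/c(x)²) u₁(x) for a.e. x, and e^{κx} u₁(x) → 1 as x → +∞. Then for every x ∈ ℝ, u₁(x) ≠ 0 and 2/(2 + c_M² γ₀) ≤ −u₁'(x)/(κ u₁(x)) ≤ 1 + γ₀/2, where γ₀ = ess sup_{x∈ℝ} |q(x)| and q = 1 − 1/c². -/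
open MeasureTheory Filter Topology

noncomputable section

/-- Real form of the equation at `k = iκ`: `u'' = (κ²/c²) u` a.e., with `u` of class `C¹`
with locally absolutely continuous derivative. -/
def SolvesHelmholtzR (c : ℝ → ℝ) (κ : ℝ) (u : ℝ → ℝ) : Prop :=
  ContDiff ℝ 1 u ∧
  ∀ a b : ℝ, deriv u b = deriv u a + ∫ x in a..b, (κ ^ 2 / (c x) ^ 2) * u x

/-- The real-valued Jost solution from `+∞` at `k = iκ`: `e^{κx} u(x) → 1` as `x → +∞`. -/
def IsJostPlusR (c : ℝ → ℝ) (κ : ℝ) (u : ℝ → ℝ) : Prop :=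
  SolvesHelmholtzR c κ u ∧
  Tendsto (fun x : ℝ => Real.exp (κ * x) * u x) atTop (𝓝 1)

/-- `γ₀ = ess sup |q|`. -/
def gamma0 (c : ℝ → ℝ) : ℝ := essSup (fun x => |qfun c x|) volume

/-!
Write `V = κ² / c²`, `m = 2 / (2 + cM² γ₀)` and `M = 1 + γ₀ / 2`. By AM–GM,
`1 / c ≤ (1 + 1 / c²) / 2 ≤ M` and `c ≤ (1 + c²) / 2 ≤ 1 / m`, so `(κ m)² ≤ V ≤ (κ M)²` a.e.

The decaying solution `u₁` is positive: past its last non-positive value `u₁'` would be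
nondecreasing, which is incompatible with `u₁ → 0`. For a constant `L ≥ 0` the function
`φ = u₁' + L u₁` satisfies `φ' = L φ + (V - L²) u₁`. With `L = κ M` this gives `φ' ≤ L φ`, so a
negative value of `φ` persists and drives `u₁` to `-∞`; with `L = κ m` the reverse inequality
makes a positive value persist and drives `u₁` to `+∞`. Hence `u₁' + κ m u₁ ≤ 0 ≤ u₁' + κ M u₁`.
-/

open Set

lemma le_of_sub_le_mul_integral {φ : ℝ → ℝ} (hφ : Continuous φ) {L x₀ : ℝ} (hL : 0 ≤ L)
    (h0 : φ x₀ < 0) (h : ∀ b, x₀ ≤ b → φ b - φ x₀ ≤ L * ∫ x in x₀..b, φ x) :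
    ∀ b, x₀ ≤ b → φ b ≤ φ x₀ := by
  have step : ∀ b, x₀ ≤ b → (∀ t ∈ Icc x₀ b, φ t ≤ 0) → φ b ≤ φ x₀ := by
    intro b hb hnonpos
    have hint : ∫ x in x₀..b, φ x ≤ 0 := by
      rw [intervalIntegral.integral_of_le hb]
      exact setIntegral_nonpos measurableSet_Ioc fun t ht => hnonpos t (Ioc_subset_Icc_self ht)
    linarith [h b hb, mul_nonpos_of_nonneg_of_nonpos hL hint]
  suffices hneg : ∀ b, x₀ ≤ b → φ b < 0 from
    fun b hb => step b hb fun t ht => (hneg t ht.1).le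
  intro b hb
  by_contra! hφb
  -- `s` is the first time `φ` reaches `0`; before `s`, `step` keeps `φ` below `φ x₀`.
  set K := Icc x₀ b ∩ {t | 0 ≤ φ t}
  have hK : IsCompact K := isCompact_Icc.inter_right (isClosed_le continuous_const hφ)
  have hs : sInf K ∈ K := hK.sInf_mem ⟨b, ⟨hb, le_rfl⟩, hφb⟩
  set s := sInf K
  have hbefore : Ico x₀ s ⊆ {t | φ t ≤ φ x₀} := fun t ht =>
    step t ht.1 fun r hr => le_of_not_gt fun hr0 =>
      (csInf_le hK.bddBelow ⟨⟨hr.1, hr.2.trans (ht.2.le.trans hs.1.2)⟩, hr0.le⟩).not_gt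
        (hr.2.trans_lt ht.2)
  have hx₀s : x₀ ≠ s := fun h => (h ▸ hs.2 : 0 ≤ φ x₀).not_gt h0
  have hs_le : φ s ≤ φ x₀ := (isClosed_le hφ continuous_const).closure_subset_iff.2 hbefore
    (by rw [closure_Ico hx₀s]; exact ⟨hs.1.1, le_rfl⟩)
  linarith [show 0 ≤ φ s from hs.2]

lemma tendsto_atTop_of_eventually_le_deriv {f : ℝ → ℝ} {η : ℝ} (hf : Differentiable ℝ f)
    (hη : 0 < η) (h : ∀ᶠ x in atTop, η ≤ deriv f x) : Tendsto f atTop atTop := by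
  obtain ⟨A, hA⟩ := eventually_atTop.1 h
  have hlin : ∀ x ≥ A, f A + η * (x - A) ≤ f x := fun x hx => by
    have := (convex_Ici A).mul_sub_le_image_sub_of_le_deriv hf.continuous.continuousOn
      hf.differentiableOn (fun y hy => hA y (by rw [interior_Ici] at hy; exact hy.le))
      A self_mem_Ici x hx hx
    linarith
  refine tendsto_atTop_mono' atTop (eventually_atTop.2 ⟨A, hlin⟩) ?_
  exact tendsto_atTop_add_const_left _ _
    ((tendsto_id.atTop_add tendsto_const_nhds).const_mul_atTop hη)

lemma deriv_nonpos_of_monotoneOn_Ici {f : ℝ → ℝ} {a l : ℝ} (hf : Differentiable ℝ f)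
    (hmono : MonotoneOn (deriv f) (Ici a)) (hlim : Tendsto f atTop (𝓝 l)) : deriv f a ≤ 0 := by
  by_contra! h
  refine not_tendsto_nhds_of_tendsto_atTop (tendsto_atTop_of_eventually_le_deriv hf h ?_) l hlim
  filter_upwards [eventually_ge_atTop a] with x hx using hmono self_mem_Ici hx hx

section SecondOrder

variable {u V : ℝ → ℝ}

lemma monotoneOn_deriv_of_nonneg
    (heq : ∀ a b, deriv u b = deriv u a + ∫ x in a..b, V x * u x) {s : Set ℝ}
    (hs : s.OrdConnected) (hV : ∀ x, 0 ≤ V x) (hu0 : ∀ x ∈ s, 0 ≤ u x) :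
    MonotoneOn (deriv u) s := fun x hx y hy hxy => by
  rw [heq x y, le_add_iff_nonneg_right]
  exact intervalIntegral.integral_nonneg hxy fun t ht =>
    mul_nonneg (hV t) (hu0 t (hs.out hx hy ht))

lemma pos_of_tendsto_zero (hu : ContDiff ℝ 1 u)
    (heq : ∀ a b, deriv u b = deriv u a + ∫ x in a..b, V x * u x) (hV : ∀ x, 0 ≤ V x)
    (hlim : Tendsto u atTop (𝓝 0)) (hev : ∀ᶠ x in atTop, 0 < u x) : ∀ x, 0 < u x := by
  by_contra! hneg
  have hdiff : Differentiable ℝ u := hu.differentiable one_ne_zero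
  obtain ⟨A, hA⟩ := eventually_atTop.1 hev
  have hbdd : BddAbove {x | u x ≤ 0} :=
    ⟨A, fun x hx => le_of_not_gt fun h => (hA x h.le).not_ge hx⟩
  set z := sSup {x | u x ≤ 0}
  have hz : u z ≤ 0 := (isClosed_le hu.continuous continuous_const).csSup_mem hneg hbdd
  have hafter : ∀ x ∈ Ioi z, 0 < u x := fun x hx =>
    lt_of_not_ge fun h => (le_csSup hbdd h).not_gt hx
  have hderiv : ∀ x ∈ Ioi z, deriv u x ≤ 0 := fun x hx =>
    deriv_nonpos_of_monotoneOn_Ici hdiff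
      ((monotoneOn_deriv_of_nonneg heq ordConnected_Ioi hV fun y hy => (hafter y hy).le).mono
        (Ici_subset_Ioi.2 hx)) hlim
  have hanti : AntitoneOn u (Ici z) :=
    antitoneOn_of_deriv_nonpos (convex_Ici z) hu.continuous.continuousOn hdiff.differentiableOn
      (by rwa [interior_Ici])
  have hz1 : u (z + 1) ≤ u z := hanti self_mem_Ici (lt_add_one z).le (lt_add_one z).le
  linarith [hafter (z + 1) (lt_add_one z)]

lemma deriv_add_mul_sub_eq (hu : ContDiff ℝ 1 u)
    (heq : ∀ a b, deriv u b = deriv u a + ∫ x in a..b, V x * u x)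
    (hVu : ∀ a b, IntervalIntegrable (fun x => V x * u x) volume a b) (L a b : ℝ) :
    (deriv u b + L * u b) - (deriv u a + L * u a) =
      L * (∫ x in a..b, (deriv u x + L * u x)) + ∫ x in a..b, (V x - L ^ 2) * u x := by
  have hcont : Continuous (deriv u) := hu.continuous_deriv le_rfl
  have hFTC : ∫ x in a..b, deriv u x = u b - u a :=
    intervalIntegral.integral_deriv_eq_sub (fun x _ => (hu.differentiable one_ne_zero) x)
      (hcont.intervalIntegrable a b)
  have hui : IntervalIntegrable u volume a b := hu.continuous.intervalIntegrable a b
  simp only [sub_mul]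
  rw [intervalIntegral.integral_add (hcont.intervalIntegrable a b) (hui.const_mul L),
    intervalIntegral.integral_sub (hVu a b) (hui.const_mul _), intervalIntegral.integral_const_mul,
    intervalIntegral.integral_const_mul, hFTC, heq a b]
  ring

lemma deriv_add_mul_nonneg (hu : ContDiff ℝ 1 u)
    (heq : ∀ a b, deriv u b = deriv u a + ∫ x in a..b, V x * u x)
    (hVu : ∀ a b, IntervalIntegrable (fun x => V x * u x) volume a b) {L : ℝ} (hL : 0 ≤ L)
    (hVL : ∀ᵐ x, V x ≤ L ^ 2) (hu0 : ∀ x, 0 ≤ u x) (hlim : Tendsto u atTop (𝓝 0)) (x₀ : ℝ) :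
    0 ≤ deriv u x₀ + L * u x₀ := by
  by_contra! h0
  have hcont : Continuous fun x => deriv u x + L * u x :=
    (hu.continuous_deriv le_rfl).add (continuous_const.mul hu.continuous)
  have hdecr := le_of_sub_le_mul_integral hcont hL h0 fun b hb => by
    have hsign : ∫ x in x₀..b, (V x - L ^ 2) * u x ≤ 0 := by
      rw [intervalIntegral.integral_of_le hb]
      refine integral_nonpos_of_ae ?_
      filter_upwards [ae_restrict_of_ae hVL] with x hx using
        mul_nonpos_of_nonpos_of_nonneg (sub_nonpos.2 hx) (hu0 x)
    linarith [deriv_add_mul_sub_eq hu heq hVu L x₀ b]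
  have hdiff : Differentiable ℝ (-u) := (hu.differentiable one_ne_zero).neg
  refine not_tendsto_nhds_of_tendsto_atTop
    (tendsto_atTop_of_eventually_le_deriv hdiff (neg_pos.2 h0) ?_) 0 (neg_zero (G := ℝ) ▸ hlim.neg)
  filter_upwards [eventually_ge_atTop x₀] with x hx
  rw [deriv.neg]
  linarith [hdecr x hx, mul_nonneg hL (hu0 x)]

lemma deriv_add_mul_nonpos (hu : ContDiff ℝ 1 u)
    (heq : ∀ a b, deriv u b = deriv u a + ∫ x in a..b, V x * u x)
    (hVu : ∀ a b, IntervalIntegrable (fun x => V x * u x) volume a b) {L : ℝ} (hL : 0 ≤ L)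
    (hVL : ∀ᵐ x, L ^ 2 ≤ V x) (hu0 : ∀ x, 0 ≤ u x) (hlim : Tendsto u atTop (𝓝 0)) (x₀ : ℝ) :
    deriv u x₀ + L * u x₀ ≤ 0 := by
  by_contra! h0
  have hcont : Continuous fun x => -(deriv u x + L * u x) :=
    ((hu.continuous_deriv le_rfl).add (continuous_const.mul hu.continuous)).neg
  have hincr := le_of_sub_le_mul_integral hcont hL (neg_neg_of_pos h0) fun b hb => by
    have hsign : 0 ≤ ∫ x in x₀..b, (V x - L ^ 2) * u x := by
      refine intervalIntegral.integral_nonneg_of_ae hb ?_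
      filter_upwards [hVL] with x hx using mul_nonneg (sub_nonneg.2 hx) (hu0 x)
    rw [intervalIntegral.integral_neg]
    linarith [deriv_add_mul_sub_eq hu heq hVu L x₀ b]
  have hLu : ∀ᶠ x in atTop, L * u x < (deriv u x₀ + L * u x₀) / 2 :=
    (hlim.const_mul L).eventually (eventually_lt_nhds (by rw [mul_zero]; exact half_pos h0))
  refine not_tendsto_nhds_of_tendsto_atTop (tendsto_atTop_of_eventually_le_deriv
    (hu.differentiable one_ne_zero) (half_pos h0) ?_) 0 hlim
  filter_upwards [eventually_ge_atTop x₀, hLu] with x hx hx'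
  linarith [hincr x hx]

end SecondOrder

lemma one_div_le_one_add_half {c γ : ℝ} (hq : |1 - 1 / c ^ 2| ≤ γ) :
    1 / c ≤ 1 + γ / 2 := by
  have hsq : 1 / c ^ 2 = (1 / c) ^ 2 := by rw [one_div_pow]
  rw [hsq] at hq
  nlinarith [(abs_le.1 hq).1, sq_nonneg (1 / c - 1)]

lemma two_div_le_one_div {c cM γ : ℝ} (hc : 0 < c) (hcM : c ≤ cM) (hγ : 0 ≤ γ)
    (hq : |1 - 1 / c ^ 2| ≤ γ) : 2 / (2 + cM ^ 2 * γ) ≤ 1 / c := by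
  have hcq : c ^ 2 - 1 ≤ cM ^ 2 * γ :=
    calc c ^ 2 - 1 = c ^ 2 * (1 - 1 / c ^ 2) := by field_simp
      _ ≤ c ^ 2 * γ := mul_le_mul_of_nonneg_left (le_of_abs_le hq) (sq_nonneg c)
      _ ≤ cM ^ 2 * γ := mul_le_mul_of_nonneg_right (pow_le_pow_left₀ hc.le hcM 2) hγ
  rw [div_le_div_iff₀ (by positivity) hc]
  nlinarith [sq_nonneg (c - 1)]

section Gamma0

variable {c : ℝ → ℝ} {c₀ cM : ℝ}

lemma ae_abs_qfun_le_gamma0 (h1 : HypH1c c c₀ cM) : ∀ᵐ x, |qfun c x| ≤ gamma0 c := by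
  obtain ⟨hc₀, -, hc⟩ := h1
  refine ae_le_essSup ⟨1 + 1 / c₀ ^ 2, eventually_map.2 ?_⟩
  filter_upwards [hc] with x hx
  have hinv : 1 / c x ^ 2 ≤ 1 / c₀ ^ 2 :=
    one_div_le_one_div_of_le (by positivity) (pow_le_pow_left₀ hc₀.le hx.1.le 2)
  have hinv0 : 0 ≤ 1 / c x ^ 2 := by positivity
  rw [qfun, abs_le]
  constructor <;> linarith

lemma gamma0_nonneg (h1 : HypH1c c c₀ cM) : 0 ≤ gamma0 c :=
  let ⟨_, hx⟩ := (ae_abs_qfun_le_gamma0 h1).exists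
  (abs_nonneg _).trans hx

lemma ae_div_sq_le (h1 : HypH1c c c₀ cM) (κ : ℝ) :
    ∀ᵐ x, κ ^ 2 / c x ^ 2 ≤ (κ * (1 + gamma0 c / 2)) ^ 2 := by
  filter_upwards [ae_abs_qfun_le_gamma0 h1, h1.2.2] with x hq hx
  have hc : 0 < c x := h1.1.trans hx.1
  rw [div_eq_mul_one_div, ← one_div_pow, mul_pow]
  exact mul_le_mul_of_nonneg_left
    (pow_le_pow_left₀ (by positivity) (one_div_le_one_add_half hq) 2) (sq_nonneg κ)

lemma ae_le_div_sq (h1 : HypH1c c c₀ cM) (κ : ℝ) :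
    ∀ᵐ x, (κ * (2 / (2 + cM ^ 2 * gamma0 c))) ^ 2 ≤ κ ^ 2 / c x ^ 2 := by
  filter_upwards [ae_abs_qfun_le_gamma0 h1, h1.2.2] with x hq hx
  have hc : 0 < c x := h1.1.trans hx.1
  have hden : 0 < 2 + cM ^ 2 * gamma0 c := by
    have := gamma0_nonneg h1; positivity
  rw [div_eq_mul_one_div (κ ^ 2), ← one_div_pow, mul_pow]
  exact mul_le_mul_of_nonneg_left
    (pow_le_pow_left₀ (by positivity) (two_div_le_one_div hc hx.2 (gamma0_nonneg h1) hq) 2)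
    (sq_nonneg κ)

end Gamma0

lemma intervalIntegrable_mul_of_ae_abs_le {V u : ℝ → ℝ} (hV : AEStronglyMeasurable V)
    {K : ℝ} (hK : ∀ᵐ x, |V x| ≤ K) (hu : Continuous u) (a b : ℝ) :
    IntervalIntegrable (fun x => V x * u x) volume a b := by
  rw [intervalIntegrable_iff]
  exact hu.integrableOn_uIoc.bdd_mul hV.restrict (ae_restrict_of_ae hK)

section Decay

variable {κ : ℝ} {u : ℝ → ℝ}

lemma tendsto_zero_of_tendsto_exp_mul (hκ : 0 < κ)
    (h : Tendsto (fun x => Real.exp (κ * x) * u x) atTop (𝓝 1)) : Tendsto u atTop (𝓝 0) := by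
  have hexp : Tendsto (fun x => Real.exp (-(κ * x))) atTop (𝓝 0) :=
    Real.tendsto_exp_atBot.comp (tendsto_neg_atTop_atBot.comp (tendsto_id.const_mul_atTop hκ))
  refine (zero_mul (1 : ℝ) ▸ hexp.mul h).congr fun x => ?_
  rw [← mul_assoc, ← Real.exp_add, neg_add_cancel, Real.exp_zero, one_mul]

lemma eventually_pos_of_tendsto_exp_mul
    (h : Tendsto (fun x => Real.exp (κ * x) * u x) atTop (𝓝 1)) : ∀ᶠ x in atTop, 0 < u x :=
  (h.eventually (eventually_gt_nhds one_pos)).mono fun _ hx =>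
    pos_of_mul_pos_right hx (Real.exp_pos _).le

end Decay

theorem w_ik_bounds_general (c : ℝ → ℝ) (hmeas : Measurable c)
    (c₀ cM : ℝ) (h1 : HypH1c c c₀ cM)
    (κ : ℝ) (hκ : 0 < κ) (u₁ : ℝ → ℝ) (hu : IsJostPlusR c κ u₁) :
    ∀ x : ℝ, u₁ x ≠ 0 ∧
      2 / (2 + cM ^ 2 * gamma0 c) ≤ -(deriv u₁ x) / (κ * u₁ x) ∧
      -(deriv u₁ x) / (κ * u₁ x) ≤ 1 + gamma0 c / 2 := by
  obtain ⟨⟨hC1, heq⟩, hlim⟩ := hu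
  have hγ := gamma0_nonneg h1
  have hV : ∀ x, 0 ≤ κ ^ 2 / c x ^ 2 := fun x => by positivity
  have hVu := intervalIntegrable_mul_of_ae_abs_le
    ((hmeas.pow_const 2).const_div (κ ^ 2)).aestronglyMeasurable
    ((ae_div_sq_le h1 κ).mono fun x hx => (abs_of_nonneg (hV x)).trans_le hx) hC1.continuous
  have hdecay := tendsto_zero_of_tendsto_exp_mul hκ hlim
  have hpos := pos_of_tendsto_zero hC1 heq hV hdecay (eventually_pos_of_tendsto_exp_mul hlim)
  have hupper := deriv_add_mul_nonneg hC1 heq hVu (by positivity) (ae_div_sq_le h1 κ)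
    (fun x => (hpos x).le) hdecay
  have hlower := deriv_add_mul_nonpos hC1 heq hVu (by positivity) (ae_le_div_sq h1 κ)
    (fun x => (hpos x).le) hdecay
  intro x
  have hκu : 0 < κ * u₁ x := mul_pos hκ (hpos x)
  refine ⟨(hpos x).ne', ?_, ?_⟩
  · rw [le_div_iff₀ hκu]
    linarith [hlower x]
  · rw [div_le_iff₀ hκu]
    linarith [hupper x]

/-- Bounds on `w(x, iκ) = -u₁'(x)/(κ u₁(x))` for `κ > 0`. -/
theorem w_ik_bounds (c : ℝ → ℝ) (hmeas : Measurable c)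
    (c₀ cM : ℝ) (h1 : HypH1c c c₀ cM) (h2 : HypH2 c)
    (κ : ℝ) (hκ : 0 < κ) (u₁ : ℝ → ℝ) (hu : IsJostPlusR c κ u₁) :
    ∀ x : ℝ, u₁ x ≠ 0 ∧
      2 / (2 + cM ^ 2 * gamma0 c) ≤ -(deriv u₁ x) / (κ * u₁ x) ∧
      -(deriv u₁ x) / (κ * u₁ x) ≤ 1 + gamma0 c / 2 :=
  w_ik_bounds_general c hmeas c₀ cM h1 κ hκ u₁ hu
end
end
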